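/- Suppose σ: ℝ^m → ℂ is measurable with 0 < c ≤ |σ(ξ)| ≤ C for all ξ, and σ = σ_+ · σ_- = τ_+ · τ_- are two factorizations where σ_±, τ_± and their inverses are bounded and, for a.e. ξ', extend analytically in ξ_m to the upper (+) resp. lower (-) half-plane with bounded extensions. Then σ_+/τ_+ is, for a.e. ξ', a function of ξ' alone (a constant in ξ_m): the factorization with index zero is unique up to a multiplicative function of ξ'. -/
import Mathlib

open Complex Filter MeasureTheory Real Set intervalIntegral

private lemma rect_zero {H : ℂ → ℂ} (hH : Continuous H)
    (hne : DifferentiableOn ℂ H {z : ℂ | z.im ≠ 0}) (a b d : ℝ) :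
    ((∫ x : ℝ in a..b, H x) - ∫ x : ℝ in a..b, H (x + d * I)) +
      I * (∫ y : ℝ in (0:ℝ)..d, H (b + y * I)) -
      I * (∫ y : ℝ in (0:ℝ)..d, H (a + y * I)) = 0 := by
  have h := Complex.integral_boundary_rect_eq_zero_of_continuousOn_of_differentiableOn H
      ((a : ℂ)) ((b : ℂ) + (d : ℂ) * I) hH.continuousOn ?_
  · simpa [smul_eq_mul] using h
  · refine hne.mono ?_
    intro z hz
    rw [Complex.mem_reProdIm] at hz
    have h2 := hz.2
    simp only [Complex.ofReal_im, Complex.add_im, Complex.mul_im, Complex.I_im, Complex.I_re,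
      Complex.ofReal_re, mul_one, mul_zero, add_zero, zero_add, sub_zero] at h2
    intro h0
    rw [h0] at h2
    rcases h2 with ⟨hl, hr⟩
    rcases le_or_gt 0 d with hd | hd
    · simp [min_eq_left hd] at hl
    · simp [max_eq_left hd.le] at hr

private lemma morera {H : ℂ → ℂ} (hH : Continuous H)
    (hne : DifferentiableOn ℂ H {z : ℂ | z.im ≠ 0}) :
    Differentiable ℂ H := by
  -- horizontal and vertical integrability
  have hih : ∀ (cc u v : ℝ), IntervalIntegrable (fun t : ℝ => H (t + cc * I)) volume u v :=
    fun cc u v => (hH.comp (by continuity)).intervalIntegrable u v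
  have hih0 : ∀ (u v : ℝ), IntervalIntegrable (fun t : ℝ => H t) volume u v :=
    fun u v => (hH.comp (by continuity)).intervalIntegrable u v
  have hiv : ∀ (cc u v : ℝ), IntervalIntegrable (fun t : ℝ => H (cc + t * I)) volume u v :=
    fun cc u v => (hH.comp (by continuity)).intervalIntegrable u v
  set P : ℂ → ℂ := fun z =>
    (∫ t : ℝ in (0:ℝ)..z.re, H t) + I * ∫ t : ℝ in (0:ℝ)..z.im, H (z.re + t * I) with hP
  have key : ∀ z w : ℂ, P w - P z =
      (∫ t : ℝ in z.re..w.re, H (t + z.im * I)) +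
        I * ∫ t : ℝ in z.im..w.im, H (w.re + t * I) := by
    intro z w
    have hA : (∫ t : ℝ in (0:ℝ)..w.re, H t) - ∫ t : ℝ in (0:ℝ)..z.re, H t
        = ∫ t : ℝ in z.re..w.re, H t :=
      integral_interval_sub_left (hih0 0 w.re) (hih0 0 z.re)
    have hB : (∫ t : ℝ in (0:ℝ)..z.im, H (w.re + t * I))
        + ∫ t : ℝ in z.im..w.im, H (w.re + t * I)
        = ∫ t : ℝ in (0:ℝ)..w.im, H (w.re + t * I) :=
      integral_add_adjacent_intervals (hiv w.re 0 z.im) (hiv w.re z.im w.im)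
    have hR := rect_zero hH hne z.re w.re z.im
    simp only [hP]
    linear_combination hA + I * hB.symm + hR
  have hder : ∀ z : ℂ, HasDerivAt P (H z) z := by
    intro z
    rw [hasDerivAt_iff_isLittleO, Asymptotics.isLittleO_iff]
    intro cpos hc
    obtain ⟨δ, hδ, hδ'⟩ := Metric.continuousAt_iff.mp (hH.continuousAt (x := z)) (cpos / 2)
      (by positivity)
    rw [Metric.eventually_nhds_iff]
    refine ⟨δ / 2, by positivity, ?_⟩
    intro w hw
    have hwz : ‖w - z‖ = dist w z := (dist_eq_norm w z).symm
    -- rewrite the difference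
    have hconst : (w - z) • H z =
        (((w.re - z.re : ℝ) : ℂ)) * H z + I * ((((w.im - z.im : ℝ) : ℂ)) * H z) := by
      have : w - z = ((w.re - z.re : ℝ) : ℂ) + ((w.im - z.im : ℝ) : ℂ) * I := by
        apply Complex.ext <;> simp
      rw [smul_eq_mul, this]; ring
    have hsplit : P w - P z - (w - z) • H z =
        (∫ t : ℝ in z.re..w.re, (H (t + z.im * I) - H z)) +
          I * ∫ t : ℝ in z.im..w.im, (H (w.re + t * I) - H z) := by
      rw [integral_sub (hih z.im z.re w.re) (intervalIntegrable_const),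
        integral_sub (hiv w.re z.im w.im) (intervalIntegrable_const),
        intervalIntegral.integral_const, intervalIntegral.integral_const, Complex.real_smul, Complex.real_smul,
        Complex.ofReal_sub, Complex.ofReal_sub]
      have hk := key z w
      rw [hconst]
      linear_combination (norm := (push_cast; ring)) hk
    rw [hsplit]
    have hb1 : ‖∫ t : ℝ in z.re..w.re, (H (t + z.im * I) - H z)‖
        ≤ cpos / 2 * |w.re - z.re| := by
      apply intervalIntegral.norm_integral_le_of_norm_le_const
      intro t ht
      have ht' : t ∈ Set.uIcc z.re w.re := Set.uIoc_subset_uIcc ht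
      have h1 : dist z.re t ≤ dist z.re w.re := Real.dist_left_le_of_mem_uIcc ht'
      have hd : dist (↑t + ↑z.im * I) z < δ := by
        have : (↑t + ↑z.im * I) - z = ((t - z.re : ℝ) : ℂ) := by
          apply Complex.ext <;> simp
        rw [dist_eq_norm, this, Complex.norm_real]
        calc |t - z.re| = dist z.re t := by rw [Real.dist_eq, abs_sub_comm]
          _ ≤ dist z.re w.re := h1
          _ = |w.re - z.re| := by rw [Real.dist_eq, abs_sub_comm]
          _ ≤ ‖w - z‖ := by
              have := Complex.abs_re_le_norm (w - z)
              simpa [Complex.sub_re] using this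
          _ < δ := by rw [hwz]; linarith
      have := hδ' hd
      rw [dist_eq_norm] at this
      exact this.le
    have hb2 : ‖∫ t : ℝ in z.im..w.im, (H (w.re + t * I) - H z)‖
        ≤ cpos / 2 * |w.im - z.im| := by
      apply intervalIntegral.norm_integral_le_of_norm_le_const
      intro t ht
      have ht' : t ∈ Set.uIcc z.im w.im := Set.uIoc_subset_uIcc ht
      have h1 : dist z.im t ≤ dist z.im w.im := Real.dist_left_le_of_mem_uIcc ht'
      have hd : dist (↑w.re + ↑t * I) z < δ := by
        have he : (↑w.re + ↑t * I) - z = ((w.re - z.re : ℝ) : ℂ) + ((t - z.im : ℝ) : ℂ) * I := by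
          apply Complex.ext <;> simp
        rw [dist_eq_norm, he]
        have h2 : ‖((w.re - z.re : ℝ) : ℂ) + ((t - z.im : ℝ) : ℂ) * I‖
            ≤ |w.re - z.re| + |t - z.im| := by
          refine (norm_add_le _ _).trans ?_
          rw [norm_mul, Complex.norm_I, mul_one, Complex.norm_real, Complex.norm_real]
          simp [Real.norm_eq_abs]
        have h3 : |w.re - z.re| ≤ ‖w - z‖ := by
          have := Complex.abs_re_le_norm (w - z)
          simpa [Complex.sub_re] using this
        have h4 : |t - z.im| ≤ ‖w - z‖ := by
          calc |t - z.im| = dist z.im t := by rw [Real.dist_eq, abs_sub_comm]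
            _ ≤ dist z.im w.im := h1
            _ = |w.im - z.im| := by rw [Real.dist_eq, abs_sub_comm]
            _ ≤ ‖w - z‖ := by
                have := Complex.abs_im_le_norm (w - z)
                simpa [Complex.sub_im] using this
        rw [hwz] at h3 h4
        calc ‖((w.re - z.re : ℝ) : ℂ) + ((t - z.im : ℝ) : ℂ) * I‖
            ≤ |w.re - z.re| + |t - z.im| := h2
          _ ≤ dist w z + dist w z := add_le_add h3 h4
          _ < δ := by linarith
      have := hδ' hd
      rw [dist_eq_norm] at this
      exact this.le
    calc ‖(∫ t : ℝ in z.re..w.re, (H (t + z.im * I) - H z)) +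
          I * ∫ t : ℝ in z.im..w.im, (H (w.re + t * I) - H z)‖
        ≤ ‖∫ t : ℝ in z.re..w.re, (H (t + z.im * I) - H z)‖ +
          ‖I * ∫ t : ℝ in z.im..w.im, (H (w.re + t * I) - H z)‖ := norm_add_le _ _
      _ = ‖∫ t : ℝ in z.re..w.re, (H (t + z.im * I) - H z)‖ +
          ‖∫ t : ℝ in z.im..w.im, (H (w.re + t * I) - H z)‖ := by
          rw [norm_mul, Complex.norm_I, one_mul]
      _ ≤ cpos / 2 * |w.re - z.re| + cpos / 2 * |w.im - z.im| := add_le_add hb1 hb2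
      _ ≤ cpos / 2 * ‖w - z‖ + cpos / 2 * ‖w - z‖ := by
          have h3 : |w.re - z.re| ≤ ‖w - z‖ := by
            have := Complex.abs_re_le_norm (w - z); simpa [Complex.sub_re] using this
          have h4 : |w.im - z.im| ≤ ‖w - z‖ := by
            have := Complex.abs_im_le_norm (w - z); simpa [Complex.sub_im] using this
          have : (0:ℝ) ≤ cpos / 2 := by positivity
          exact add_le_add (by nlinarith) (by nlinarith)
      _ = cpos * ‖w - z‖ := by ring
  have hPdiff : Differentiable ℂ P := fun z => (hder z).differentiableAt
  have hHP : H = deriv P := funext fun z => ((hder z).deriv).symm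
  rw [hHP]
  exact (Complex.analyticOnNhd_univ_iff_differentiable.mpr hPdiff).deriv.differentiableOn
    |> differentiableOn_univ.mp

private lemma glue_const {f g : ℂ → ℂ} {M : ℝ}
    (hf : DifferentiableOn ℂ f {z : ℂ | 0 ≤ z.im})
    (hg : DifferentiableOn ℂ g {z : ℂ | z.im ≤ 0})
    (hbf : ∀ z : ℂ, 0 ≤ z.im → ‖f z‖ ≤ M) (hbg : ∀ z : ℂ, z.im ≤ 0 → ‖g z‖ ≤ M)
    (heq : ∀ x : ℝ, f x = g x) (x y : ℝ) : f x = f y := by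
  set H : ℂ → ℂ := fun z => if 0 ≤ z.im then f z else g z with hHdef
  have hHf : ∀ z : ℂ, 0 ≤ z.im → H z = f z := fun z hz => if_pos hz
  have hHg : ∀ z : ℂ, z.im ≤ 0 → H z = g z := by
    intro z hz
    by_cases h : 0 ≤ z.im
    · have hz0 : z.im = 0 := le_antisymm hz h
      have hzr : z = (z.re : ℂ) := Complex.ext (by simp) (by simp [hz0])
      simp only [hHdef, if_pos h]
      rw [hzr]; exact heq z.re
    · simp only [hHdef, if_neg h]
  have hopen1 : IsOpen {z : ℂ | 0 < z.im} := isOpen_lt continuous_const Complex.continuous_im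
  have hopen2 : IsOpen {z : ℂ | z.im < 0} := isOpen_lt Complex.continuous_im continuous_const
  have hH : Continuous H := by
    rw [continuous_iff_continuousAt]
    intro z
    rcases lt_trichotomy z.im 0 with h | h | h
    · have hmem : {w : ℂ | w.im < 0} ∈ nhds z := hopen2.mem_nhds h
      have hca : ContinuousAt g z :=
        (hg.differentiableAt (Filter.mem_of_superset hmem fun w hw => show w.im ≤ 0 from le_of_lt hw)).continuousAt
      exact hca.congr (Filter.eventuallyEq_of_mem hmem fun w hw => (hHg w (le_of_lt hw)).symm)
    · have huniv : (Set.univ : Set ℂ) = {z : ℂ | 0 ≤ z.im} ∪ {z : ℂ | z.im ≤ 0} := by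
        ext w; simp [le_total 0 w.im]
      rw [← continuousWithinAt_univ, huniv]
      have c1 : ContinuousWithinAt H {z : ℂ | 0 ≤ z.im} z :=
        (hf.continuousOn z (by simp [h])).congr (fun w hw => hHf w hw) (hHf z (by simp [h]))
      have c2 : ContinuousWithinAt H {z : ℂ | z.im ≤ 0} z :=
        (hg.continuousOn z (by simp [h.le])).congr (fun w hw => hHg w hw) (hHg z h.le)
      exact c1.union c2
    · have hmem : {w : ℂ | 0 < w.im} ∈ nhds z := hopen1.mem_nhds h
      have hca : ContinuousAt f z :=
        (hf.differentiableAt (Filter.mem_of_superset hmem fun w hw => show 0 ≤ w.im from le_of_lt hw)).continuousAt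
      exact hca.congr (Filter.eventuallyEq_of_mem hmem fun w hw => (hHf w (le_of_lt hw)).symm)
  have hne : DifferentiableOn ℂ H {z : ℂ | z.im ≠ 0} := by
    intro z hz
    rcases lt_or_gt_of_ne (hz : z.im ≠ 0) with h | h
    · have hmem : {w : ℂ | w.im < 0} ∈ nhds z := hopen2.mem_nhds h
      exact ((hg.differentiableAt
        (Filter.mem_of_superset hmem fun w hw => show w.im ≤ 0 from le_of_lt hw)).congr_of_eventuallyEq
        (Filter.eventuallyEq_of_mem hmem fun w hw => hHg w (le_of_lt hw))).differentiableWithinAt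
    · have hmem : {w : ℂ | 0 < w.im} ∈ nhds z := hopen1.mem_nhds h
      exact ((hf.differentiableAt
        (Filter.mem_of_superset hmem fun w hw => show 0 ≤ w.im from le_of_lt hw)).congr_of_eventuallyEq
        (Filter.eventuallyEq_of_mem hmem fun w hw => hHf w (le_of_lt hw))).differentiableWithinAt
  have hdiff : Differentiable ℂ H := morera hH hne
  have hbdd : Bornology.IsBounded (Set.range H) := by
    rw [isBounded_iff_forall_norm_le]
    refine ⟨M, ?_⟩
    rintro _ ⟨z, rfl⟩
    by_cases h : 0 ≤ z.im
    · rw [hHf z h]; exact hbf z h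
    · rw [hHg z (le_of_not_ge h)]; exact hbg z (le_of_not_ge h)
  have := hdiff.apply_eq_apply_of_bounded hbdd x y
  rwa [hHf x (by simp), hHf y (by simp)] at this

/-- Uniqueness of index-zero factorization: if for a.e. `ξ'` the symbol
`σ(ξ',·)` admits two factorizations `σ = F_+ F_- = G_+ G_-` into boundary values of
functions holomorphic, bounded above and below on the closed upper (+) resp. lower
(-) half-planes, then `F_+/G_+` is (a.e. in `ξ'`) constant in the last variable:
the factorization is unique up to a multiplicative function of `ξ'`. -/
theorem stmt15 (m : ℕ) (c C : ℝ) (hc : 0 < c)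
    (Fp Gp Fm Gm : EuclideanSpace ℝ (Fin (m - 1)) → ℂ → ℂ)
    (hplus : ∀ᵐ ξ' : EuclideanSpace ℝ (Fin (m - 1)),
      DifferentiableOn ℂ (Fp ξ') {z : ℂ | 0 ≤ z.im} ∧
      DifferentiableOn ℂ (Gp ξ') {z : ℂ | 0 ≤ z.im} ∧
      ∀ z : ℂ, 0 ≤ z.im →
        c ≤ ‖Fp ξ' z‖ ∧ ‖Fp ξ' z‖ ≤ C ∧ c ≤ ‖Gp ξ' z‖ ∧ ‖Gp ξ' z‖ ≤ C)
    (hminus : ∀ᵐ ξ' : EuclideanSpace ℝ (Fin (m - 1)),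
      DifferentiableOn ℂ (Fm ξ') {z : ℂ | z.im ≤ 0} ∧
      DifferentiableOn ℂ (Gm ξ') {z : ℂ | z.im ≤ 0} ∧
      ∀ z : ℂ, z.im ≤ 0 →
        c ≤ ‖Fm ξ' z‖ ∧ ‖Fm ξ' z‖ ≤ C ∧ c ≤ ‖Gm ξ' z‖ ∧ ‖Gm ξ' z‖ ≤ C)
    (heq : ∀ᵐ ξ' : EuclideanSpace ℝ (Fin (m - 1)),
      ∀ x : ℝ, Fp ξ' x * Fm ξ' x = Gp ξ' x * Gm ξ' x) :
    ∀ᵐ ξ' : EuclideanSpace ℝ (Fin (m - 1)),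
      ∀ x y : ℝ, Fp ξ' x / Gp ξ' x = Fp ξ' y / Gp ξ' y := by
  filter_upwards [hplus, hminus, heq] with ξ' hp hm he
  obtain ⟨hFp, hGp, hb⟩ := hp
  obtain ⟨hFm, hGm, hb'⟩ := hm
  intro x y
  -- nonvanishing
  have hGp0 : ∀ z : ℂ, 0 ≤ z.im → Gp ξ' z ≠ 0 := fun z hz => by
    have := (hb z hz).2.2.1
    intro h0; rw [h0, norm_zero] at this; linarith
  have hFm0 : ∀ z : ℂ, z.im ≤ 0 → Fm ξ' z ≠ 0 := fun z hz => by
    have := (hb' z hz).1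
    intro h0; rw [h0, norm_zero] at this; linarith
  set f : ℂ → ℂ := fun z => Fp ξ' z / Gp ξ' z with hfdef
  set g : ℂ → ℂ := fun z => Gm ξ' z / Fm ξ' z with hgdef
  have hf : DifferentiableOn ℂ f {z : ℂ | 0 ≤ z.im} := hFp.div hGp fun z hz => hGp0 z hz
  have hg : DifferentiableOn ℂ g {z : ℂ | z.im ≤ 0} := hGm.div hFm fun z hz => hFm0 z hz
  have hbf : ∀ z : ℂ, 0 ≤ z.im → ‖f z‖ ≤ C / c := by
    intro z hz
    obtain ⟨h1, h2, h3, h4⟩ := hb z hz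
    simp only [hfdef, norm_div]
    exact div_le_div₀ (le_trans (norm_nonneg _) h2) h2 hc h3
  have hbg : ∀ z : ℂ, z.im ≤ 0 → ‖g z‖ ≤ C / c := by
    intro z hz
    obtain ⟨h1, h2, h3, h4⟩ := hb' z hz
    simp only [hgdef, norm_div]
    exact div_le_div₀ (le_trans (norm_nonneg _) h4) h4 hc h1
  have heqr : ∀ t : ℝ, f t = g t := by
    intro t
    have him : ((t : ℂ)).im = 0 := by simp
    have h1 : Gp ξ' t ≠ 0 := hGp0 t (by rw [him])
    have h2 : Fm ξ' t ≠ 0 := hFm0 t (by rw [him])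
    simp only [hfdef, hgdef]
    rw [div_eq_div_iff h1 h2]
    linear_combination he t
  exact glue_const hf hg hbf hbg heqr x y
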